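/- arXiv:1908.02644 — 2 statements merged into one kernel-verified Lean document; each statement's English description precedes it below -/
import Mathlib

section
/- Preservation for typedQASM expressions: if Γ ⊢ E : τ, ⊢ σ : Γ, and ⟨E, σ, η, |ψ⟩⟩ ⇓ v, then exactly one of the following holds: (1) τ = β for some base type β and v = l for some location l; (2) τ = β[I] and v = (l₀, …, l_{I′}) for some locations with I′ ≥ I; or (3) τ = Circuit(τ₁, …, τₙ) and v = λ x₁:τ₁, …, xₙ:τₙ. U for some unitary statement U. -/
namespace TypedQASM

/-! ### Quantum states and gate actions -/

/-- Locations (heap indices / qubit indices). -/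
abbrev Loc := ℕ

/-- A quantum state on countably many qubits, given by its amplitudes on
classical basis states. -/
abbrev QState := (Loc → Bool) → ℂ

/-- Apply a Hadamard gate at qubit `l`. -/
noncomputable def applyH (l : Loc) (ψ : QState) : QState := fun f =>
  (1 / (Real.sqrt 2 : ℂ)) *
    (ψ (Function.update f l false) +
      (if f l then -1 else 1) * ψ (Function.update f l true))

/-- Apply a `T` gate at qubit `l`. -/
noncomputable def applyT (l : Loc) (ψ : QState) : QState := fun f =>
  (if f l then Complex.exp (2 * (Real.pi : ℂ) * Complex.I / 8) else 1) * ψ f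

/-- Apply a `T†` gate at qubit `l`. -/
noncomputable def applyTdg (l : Loc) (ψ : QState) : QState := fun f =>
  (if f l then Complex.exp (-(2 * (Real.pi : ℂ) * Complex.I / 8)) else 1) * ψ f

/-- Apply a CNOT gate with control `l₁` and target `l₂`. -/
def applyCNOT (l₁ l₂ : Loc) (ψ : QState) : QState := fun f =>
  ψ (Function.update f l₂ (Bool.xor (f l₁) (f l₂)))

/-- Apply the projector `P^c = |c⟩⟨c|` at qubit `l`. -/
def proj (c : Bool) (l : Loc) (ψ : QState) : QState := fun f =>
  if f l = c then ψ f else 0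

/-- The all-zeros state `|00⋯⟩`. -/
noncomputable def ket0 : QState := fun f =>
  haveI := Classical.propDecidable (∀ l, f l = false)
  if ∀ l, f l = false then 1 else 0

/-! ### Syntax of typedQASM -/

/-- Base types `β ::= Bit | Qbit`. -/
inductive BaseTy
  | bit
  | qbit

/-- Types `τ ::= β | β[I] | Circuit(τ₁,…,τₙ)`. -/
inductive Ty
  | base : BaseTy → Ty
  | reg : BaseTy → ℕ → Ty
  | circuit : List Ty → Ty

/-- Expressions `E ::= x | x[I]`. -/
inductive Expr
  | var : String → Expr
  | idx : String → ℕ → Expr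

/-- Unitary statements
`U ::= cx(E₁,E₂) | h(E) | t(E) | tdg(E) | E(E₁,…,Eₙ) | U₁;U₂`. -/
inductive UStmt
  | cnot : Expr → Expr → UStmt
  | hGate : Expr → UStmt
  | tGate : Expr → UStmt
  | tdgGate : Expr → UStmt
  | app : Expr → List Expr → UStmt
  | seq : UStmt → UStmt → UStmt

/-- Commands, with block-scoped declarations (typedQASM style). -/
inductive Cmd
  | creg : String → ℕ → Cmd → Cmd
  | qreg : String → ℕ → Cmd → Cmd
  | gate : String → List (String × Ty) → UStmt → Cmd → Cmd
  | meas : Expr → Expr → Cmd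
  | reset : Expr → Cmd
  | unit : UStmt → Cmd
  | cond : Expr → ℕ → UStmt → Cmd
  | seq : Cmd → Cmd → Cmd

/-- Values: locations, register tuples `(l₀,…,l_{I−1})`, and circuit
abstractions `λ x₁:τ₁,…,xₙ:τₙ. U`. -/
inductive Value
  | loc : Loc → Value
  | reg : List Loc → Value
  | circ : List (String × Ty) → UStmt → Value

/-- Environments map identifiers to values. -/
abbrev Env := String → Option Value

/-- Classical heaps map locations to (classical) values. -/
abbrev Heap := Loc → ℕ

/-- The empty environment. -/
def emptyEnv : Env := fun _ => none

/-- Environment update `σ[x ← v]`. -/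
def updEnv (σ : Env) (x : String) (v : Value) : Env :=
  fun z => if z = x then some v else σ z

/-! ### Substitution -/

/-- A (simultaneous) substitution of expressions for identifiers. -/
abbrev Subst := String → Option Expr

/-- Substitution on expressions. -/
def Expr.substE (s : Subst) : Expr → Expr
  | .var x => (s x).getD (.var x)
  | .idx x i =>
    match s x with
    | some (.var y) => .idx y i
    | some (.idx y _) => .idx y i
    | none => .idx x i

/-- Substitution on unitary statements. -/
def UStmt.substU (s : Subst) : UStmt → UStmt
  | .cnot e₁ e₂ => .cnot (e₁.substE s) (e₂.substE s)
  | .hGate e => .hGate (e.substE s)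
  | .tGate e => .tGate (e.substE s)
  | .tdgGate e => .tdgGate (e.substE s)
  | .app e es => .app (e.substE s) (es.map (Expr.substE s))
  | .seq u₁ u₂ => .seq (u₁.substU s) (u₂.substU s)

/-- The simultaneous substitution `{E₁/x₁, …, Eₙ/xₙ}` determined by a
parameter list and an argument list. -/
def mkSubst (params : List (String × Ty)) (es : List Expr) : Subst :=
  fun z => ((params.map Prod.fst).zip es).lookup z

/-! ### Operational semantics -/

/-- Big-step evaluation of expressions: `⟨E, σ, η, |ψ⟩⟩ ⇓ v`. -/
inductive EvalE : Expr → Env → Heap → QState → Value → Prop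
  | var {σ : Env} {η : Heap} {ψ : QState} {x : String} {v : Value} :
      σ x = some v → EvalE (.var x) σ η ψ v
  | idx {σ : Env} {η : Heap} {ψ : QState} {x : String} {i : ℕ}
      {ls : List Loc} {l : Loc} :
      EvalE (.var x) σ η ψ (.reg ls) → ls[i]? = some l →
      EvalE (.idx x i) σ η ψ (.loc l)

/-- Big-step evaluation of unitary statements: `⟨U, σ, η, |ψ⟩⟩ ⇓ |ψ′⟩`. -/
inductive EvalU : UStmt → Env → Heap → QState → QState → Prop
  | hGate {σ : Env} {η : Heap} {ψ : QState} {e : Expr} {l : Loc} :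
      EvalE e σ η ψ (.loc l) → EvalU (.hGate e) σ η ψ (applyH l ψ)
  | tGate {σ : Env} {η : Heap} {ψ : QState} {e : Expr} {l : Loc} :
      EvalE e σ η ψ (.loc l) → EvalU (.tGate e) σ η ψ (applyT l ψ)
  | tdgGate {σ : Env} {η : Heap} {ψ : QState} {e : Expr} {l : Loc} :
      EvalE e σ η ψ (.loc l) → EvalU (.tdgGate e) σ η ψ (applyTdg l ψ)
  | cnot {σ : Env} {η : Heap} {ψ : QState} {e₁ e₂ : Expr} {l₁ l₂ : Loc} :
      EvalE e₁ σ η ψ (.loc l₁) → EvalE e₂ σ η ψ (.loc l₂) →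
      EvalU (.cnot e₁ e₂) σ η ψ (applyCNOT l₁ l₂ ψ)
  | app {σ : Env} {η : Heap} {ψ ψ' : QState} {e : Expr} {es : List Expr}
      {params : List (String × Ty)} {body : UStmt} :
      EvalE e σ η ψ (.circ params body) →
      EvalU (body.substU (mkSubst params es)) σ η ψ ψ' →
      EvalU (.app e es) σ η ψ ψ'
  | seq {σ : Env} {η : Heap} {ψ ψ' ψ'' : QState} {u₁ u₂ : UStmt} :
      EvalU u₁ σ η ψ ψ' → EvalU u₂ σ η ψ' ψ'' →
      EvalU (.seq u₁ u₂) σ η ψ ψ''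

/-- Big-step evaluation of commands:
`⟨C, σ, η, |ψ⟩⟩ ⇓ ⟨σ′, η′, |ψ′⟩⟩` (block-scoped declarations; measurement is
nondeterministic). -/
inductive EvalC : Cmd → Env → Heap → QState → Env → Heap → QState → Prop
  | creg {σ σ' : Env} {η η' : Heap} {ψ ψ' : QState} {x : String} {n : ℕ}
      {c : Cmd} {ls : List Loc} :
      ls.length = n → ls.Nodup →
      EvalC c (updEnv σ x (.reg ls)) η ψ σ' η' ψ' →
      EvalC (.creg x n c) σ η ψ σ η' ψ'
  | qreg {σ σ' : Env} {η η' : Heap} {ψ ψ' : QState} {x : String} {n : ℕ}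
      {c : Cmd} {ls : List Loc} :
      ls.length = n → ls.Nodup →
      EvalC c (updEnv σ x (.reg ls)) η ψ σ' η' ψ' →
      EvalC (.qreg x n c) σ η ψ σ η' ψ'
  | gate {σ σ' : Env} {η η' : Heap} {ψ ψ' : QState} {x : String}
      {params : List (String × Ty)} {body : UStmt} {c : Cmd} :
      EvalC c (updEnv σ x (.circ params body)) η ψ σ' η' ψ' →
      EvalC (.gate x params body c) σ η ψ σ η' ψ'
  | meas {σ : Env} {η : Heap} {ψ : QState} {e₁ e₂ : Expr} {l₁ l₂ : Loc}
      {b : Bool} :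
      EvalE e₁ σ η ψ (.loc l₁) → EvalE e₂ σ η ψ (.loc l₂) →
      EvalC (.meas e₁ e₂) σ η ψ σ
        (Function.update η l₂ (if b then 1 else 0)) (proj b l₁ ψ)
  | reset {σ : Env} {η : Heap} {ψ : QState} {e : Expr} {l : Loc} :
      EvalE e σ η ψ (.loc l) →
      EvalC (.reset e) σ η ψ σ η (proj false l ψ)
  | unit {σ : Env} {η : Heap} {ψ ψ' : QState} {u : UStmt} :
      EvalU u σ η ψ ψ' → EvalC (.unit u) σ η ψ σ η ψ'
  | condF {σ : Env} {η : Heap} {ψ : QState} {e : Expr} {n : ℕ} {u : UStmt}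
      {l : Loc} :
      EvalE e σ η ψ (.loc l) → η l ≠ n →
      EvalC (.cond e n u) σ η ψ σ η ψ
  | condT {σ : Env} {η : Heap} {ψ ψ' : QState} {e : Expr} {n : ℕ} {u : UStmt}
      {l : Loc} :
      EvalE e σ η ψ (.loc l) → η l = n → EvalU u σ η ψ ψ' →
      EvalC (.cond e n u) σ η ψ σ η ψ'
  | seq {σ σ' σ'' : Env} {η η' η'' : Heap} {ψ ψ' ψ'' : QState} {c₁ c₂ : Cmd} :
      EvalC c₁ σ η ψ σ' η' ψ' → EvalC c₂ σ' η' ψ' σ'' η'' ψ'' →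
      EvalC (.seq c₁ c₂) σ η ψ σ'' η'' ψ''

/-! ### Type system -/

/-- Typing contexts. -/
abbrev Ctx := List (String × Ty)

/-- Typing of expressions `Γ ⊢ E : τ`, with bounds-checked dereference and
subtyping on register lengths. -/
inductive HasTyE : Ctx → Expr → Ty → Prop
  | var {Γ : Ctx} {x : String} {τ : Ty} :
      Γ.lookup x = some τ → HasTyE Γ (.var x) τ
  | idx {Γ : Ctx} {x : String} {β : BaseTy} {i n : ℕ} :
      HasTyE Γ (.var x) (.reg β n) → i < n →
      HasTyE Γ (.idx x i) (.base β)
  | sub {Γ : Ctx} {e : Expr} {β : BaseTy} {n n' : ℕ} :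
      HasTyE Γ e (.reg β n') → n ≤ n' →
      HasTyE Γ e (.reg β n)

/-- Typing of unitary statements `Γ ⊢ U : Unit`. -/
inductive HasTyU : Ctx → UStmt → Prop
  | cnot {Γ : Ctx} {e₁ e₂ : Expr} :
      HasTyE Γ e₁ (.base .qbit) → HasTyE Γ e₂ (.base .qbit) →
      HasTyU Γ (.cnot e₁ e₂)
  | hGate {Γ : Ctx} {e : Expr} :
      HasTyE Γ e (.base .qbit) → HasTyU Γ (.hGate e)
  | tGate {Γ : Ctx} {e : Expr} :
      HasTyE Γ e (.base .qbit) → HasTyU Γ (.tGate e)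
  | tdgGate {Γ : Ctx} {e : Expr} :
      HasTyE Γ e (.base .qbit) → HasTyU Γ (.tdgGate e)
  | app {Γ : Ctx} {e : Expr} {es : List Expr} {τs : List Ty} :
      HasTyE Γ e (.circuit τs) → List.Forall₂ (HasTyE Γ) es τs →
      HasTyU Γ (.app e es)
  | seq {Γ : Ctx} {u₁ u₂ : UStmt} :
      HasTyU Γ u₁ → HasTyU Γ u₂ → HasTyU Γ (.seq u₁ u₂)

/-- Typing of commands `Γ ⊢ C : Unit`. -/
inductive HasTyC : Ctx → Cmd → Prop
  | creg {Γ : Ctx} {x : String} {n : ℕ} {c : Cmd} :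
      HasTyC ((x, Ty.reg .bit n) :: Γ) c → HasTyC Γ (.creg x n c)
  | qreg {Γ : Ctx} {x : String} {n : ℕ} {c : Cmd} :
      HasTyC ((x, Ty.reg .qbit n) :: Γ) c → HasTyC Γ (.qreg x n c)
  | gate {Γ : Ctx} {x : String} {params : List (String × Ty)} {u : UStmt}
      {c : Cmd} :
      HasTyU (params ++ Γ) u →
      HasTyC ((x, Ty.circuit (params.map Prod.snd)) :: Γ) c →
      HasTyC Γ (.gate x params u c)
  | meas {Γ : Ctx} {e₁ e₂ : Expr} :
      HasTyE Γ e₁ (.base .qbit) → HasTyE Γ e₂ (.base .bit) →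
      HasTyC Γ (.meas e₁ e₂)
  | reset {Γ : Ctx} {e : Expr} :
      HasTyE Γ e (.base .qbit) → HasTyC Γ (.reset e)
  | unit {Γ : Ctx} {u : UStmt} :
      HasTyU Γ u → HasTyC Γ (.unit u)
  | cond {Γ : Ctx} {e : Expr} {n : ℕ} {u : UStmt} :
      HasTyE Γ e (.base .bit) → HasTyU Γ u →
      HasTyC Γ (.cond e n u)
  | seq {Γ : Ctx} {c₁ c₂ : Cmd} :
      HasTyC Γ c₁ → HasTyC Γ c₂ → HasTyC Γ (.seq c₁ c₂)

/-- Environment typing `⊢ σ : Γ`. -/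
inductive EnvTy : Env → Ctx → Prop
  | nil : EnvTy emptyEnv []
  | reg {σ : Env} {Γ : Ctx} {x : String} {β : BaseTy} {n : ℕ} {ls : List Loc} :
      EnvTy σ Γ → ls.length = n →
      EnvTy (updEnv σ x (.reg ls)) ((x, Ty.reg β n) :: Γ)
  | circ {σ : Env} {Γ : Ctx} {x : String} {params : List (String × Ty)}
      {u : UStmt} :
      EnvTy σ Γ → HasTyU (params ++ Γ) u →
      EnvTy (updEnv σ x (.circ params u))
        ((x, Ty.circuit (params.map Prod.snd)) :: Γ)

end TypedQASM

namespace TypedQASM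

/-- `v` is a location and `τ` a base type. -/
def IsBaseRes (τ : Ty) (v : Value) : Prop :=
  ∃ (β : BaseTy) (l : Loc), τ = Ty.base β ∧ v = Value.loc l

/-- `v` is a register `(l₀,…,l_{I′})` and `τ = β[I]` with `I′ ≥ I`
(i.e. the register has at least `I` cells). -/
def IsRegRes (τ : Ty) (v : Value) : Prop :=
  ∃ (β : BaseTy) (I : ℕ) (ls : List Loc),
    τ = Ty.reg β I ∧ v = Value.reg ls ∧ I ≤ ls.length

/-- `v` is a circuit abstraction `λ x₁:τ₁,…,xₙ:τₙ. U` and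
`τ = Circuit(τ₁,…,τₙ)`. -/
def IsCircRes (τ : Ty) (v : Value) : Prop :=
  ∃ (params : List (String × Ty)) (U : UStmt),
    τ = Ty.circuit (params.map Prod.snd) ∧ v = Value.circ params U

theorem lookup_cons_updEnv_eq_some {σ : Env} {Γ : Ctx} {x y : String} {τ τ' : Ty}
    {v v' : Value} (hΓ : ((y, τ') :: Γ).lookup x = some τ) (hσ : updEnv σ y v' x = some v) :
    τ' = τ ∧ v' = v ∨ Γ.lookup x = some τ ∧ σ x = some v := by
  by_cases hxy : x = y
  · subst hxy
    simp only [List.lookup_cons_self, Option.some.injEq, updEnv, if_pos] at hΓ hσ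
    exact Or.inl ⟨hΓ, hσ⟩
  · simp only [List.lookup_cons, beq_eq_false_iff_ne.mpr hxy, updEnv, if_neg hxy] at hΓ hσ
    exact Or.inr ⟨hΓ, hσ⟩

theorem EnvTy.isRegRes_or_isCircRes {σ : Env} {Γ : Ctx} (henv : EnvTy σ Γ) {x : String}
    {τ : Ty} {v : Value} (hΓ : Γ.lookup x = some τ) (hσ : σ x = some v) :
    IsRegRes τ v ∨ IsCircRes τ v := by
  induction henv with
  | nil => simp at hΓ
  | @reg σ Γ y β n ls _ hlen ih =>
    rcases lookup_cons_updEnv_eq_some hΓ hσ with ⟨rfl, rfl⟩ | ⟨hΓ, hσ⟩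
    · exact Or.inl ⟨β, n, ls, rfl, rfl, hlen.ge⟩
    · exact ih hΓ hσ
  | @circ σ Γ y params u _ _ ih =>
    rcases lookup_cons_updEnv_eq_some hΓ hσ with ⟨rfl, rfl⟩ | ⟨hΓ, hσ⟩
    · exact Or.inr ⟨params, u, rfl, rfl⟩
    · exact ih hΓ hσ

theorem HasTyE.isBaseRes_or_isRegRes_or_isCircRes {Γ : Ctx} {E : Expr} {τ : Ty} {σ : Env}
    {η : Heap} {ψ : QState} {v : Value} (hty : HasTyE Γ E τ) (henv : EnvTy σ Γ)
    (hev : EvalE E σ η ψ v) : IsBaseRes τ v ∨ IsRegRes τ v ∨ IsCircRes τ v := by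
  induction hty generalizing v with
  | var hΓ =>
    cases hev with
    | var hσ => exact Or.inr (henv.isRegRes_or_isCircRes hΓ hσ)
  | @idx _ β _ _ _ _ _ =>
    cases hev with
    | @idx _ _ _ _ _ _ l _ _ => exact Or.inl ⟨β, l, rfl, rfl⟩
  | @sub _ β n _ _ hle ih =>
    rcases ih hev with ⟨_, _, ⟨⟩, -⟩ | ⟨_, _, ls, ⟨⟩, rfl, hlen⟩ | ⟨_, _, ⟨⟩, -⟩
    exact Or.inr (Or.inl ⟨β, n, ls, rfl, rfl, hle.trans hlen⟩)

-- The three cases are told apart by the head constructor of `τ`.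
theorem exactlyOne_of_isBaseRes_or_isRegRes_or_isCircRes {τ : Ty} {v : Value}
    (h : IsBaseRes τ v ∨ IsRegRes τ v ∨ IsCircRes τ v) :
    (IsBaseRes τ v ∧ ¬ IsRegRes τ v ∧ ¬ IsCircRes τ v) ∨
    (¬ IsBaseRes τ v ∧ IsRegRes τ v ∧ ¬ IsCircRes τ v) ∨
    (¬ IsBaseRes τ v ∧ ¬ IsRegRes τ v ∧ IsCircRes τ v) := by
  rcases h with ⟨_, _, rfl, rfl⟩ | ⟨_, _, _, rfl, rfl, _⟩ | ⟨_, _, rfl, rfl⟩ <;>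
    simp_all [IsBaseRes, IsRegRes, IsCircRes]

/-- **Preservation for typedQASM expressions**: if `Γ ⊢ E : τ`, `⊢ σ : Γ`,
and `⟨E, σ, η, |ψ⟩⟩ ⇓ v`, then exactly one of the following holds:
(1) `τ` is a base type and `v` a location; (2) `τ = β[I]` and `v` is a
register with at least `I` cells; (3) `τ = Circuit(τ₁,…,τₙ)` and `v` is a
corresponding circuit abstraction. -/
theorem preservation_expr {Γ : Ctx} {E : Expr} {τ : Ty} {σ : Env} {η : Heap}
    {ψ : QState} {v : Value}
    (hty : HasTyE Γ E τ) (henv : EnvTy σ Γ) (hev : EvalE E σ η ψ v) :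
    (IsBaseRes τ v ∧ ¬ IsRegRes τ v ∧ ¬ IsCircRes τ v) ∨
    (¬ IsBaseRes τ v ∧ IsRegRes τ v ∧ ¬ IsCircRes τ v) ∨
    (¬ IsBaseRes τ v ∧ ¬ IsRegRes τ v ∧ IsCircRes τ v) :=
  exactlyOne_of_isBaseRes_or_isRegRes_or_isCircRes
    (hty.isBaseRes_or_isRegRes_or_isCircRes henv hev)

end TypedQASM
end

section
/- Progress for typedQASM expressions: if Γ ⊢ E : τ and ⊢ σ : Γ, then for every classical heap η and quantum state |ψ⟩ there exists a value v with ⟨E, σ, η, |ψ⟩⟩ ⇓ v. -/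
/-! `⊢ σ : Γ` binds every identifier of `Γ`, and binds an identifier of register type `β[n]` to
a tuple of exactly `n` locations. Subtyping only lowers the declared length, so a dereference
`x[i]` that passed the bounds check `i < n` stays inside the tuple that `σ` holds for `x`. -/

namespace TypedQASM

namespace EnvTy

variable {σ : Env} {Γ : Ctx}

theorem exists_of_lookup (henv : EnvTy σ Γ) {x : String} {τ : Ty}
    (hx : Γ.lookup x = some τ) : ∃ v, σ x = some v := by
  induction henv with
  | nil => simp at hx
  | reg _ _ ih | circ _ _ ih =>
    unfold updEnv
    split_ifs with h
    · exact ⟨_, rfl⟩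
    · rw [List.lookup, beq_false_of_ne h] at hx
      exact ih hx

theorem exists_reg_of_lookup (henv : EnvTy σ Γ) {x : String} {β : BaseTy} {n : ℕ}
    (hx : Γ.lookup x = some (.reg β n)) : ∃ ls, σ x = some (.reg ls) ∧ ls.length = n := by
  induction henv with
  | nil => simp at hx
  | reg _ _ ih | circ _ _ ih =>
    unfold updEnv
    split_ifs with h
    · simp_all [List.lookup]
    · rw [List.lookup, beq_false_of_ne h] at hx
      exact ih hx

theorem exists_reg_of_hasTyE_var (henv : EnvTy σ Γ) {x : String} {β : BaseTy} {n : ℕ}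
    (hty : HasTyE Γ (.var x) (.reg β n)) : ∃ ls, σ x = some (.reg ls) ∧ n ≤ ls.length := by
  generalize hE : Expr.var x = E at hty
  generalize hτ : Ty.reg β n = τ at hty
  induction hty generalizing n with
  | var hx =>
    cases hE; cases hτ
    obtain ⟨ls, hls, hlen⟩ := henv.exists_reg_of_lookup hx
    exact ⟨ls, hls, hlen.ge⟩
  | idx => cases hE
  | sub _ hle ih =>
    cases hτ
    obtain ⟨ls, hls, hlen⟩ := ih hE rfl
    exact ⟨ls, hls, hle.trans hlen⟩

end EnvTy

/-- **Progress for typedQASM expressions**: if `Γ ⊢ E : τ` and `⊢ σ : Γ`,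
then for every classical heap `η` and quantum state `|ψ⟩` there exists a
value `v` with `⟨E, σ, η, |ψ⟩⟩ ⇓ v`. -/
theorem progress_expr {Γ : Ctx} {E : Expr} {τ : Ty} {σ : Env}
    (hty : HasTyE Γ E τ) (henv : EnvTy σ Γ) :
    ∀ (η : Heap) (ψ : QState), ∃ v : Value, EvalE E σ η ψ v := by
  intro η ψ
  induction hty with
  | var hx =>
    obtain ⟨v, hv⟩ := henv.exists_of_lookup hx
    exact ⟨v, .var hv⟩
  | idx hx hi =>
    obtain ⟨ls, hls, hlen⟩ := henv.exists_reg_of_hasTyE_var hx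
    exact ⟨.loc ls[_], .idx (.var hls) (List.getElem?_eq_getElem (hi.trans_le hlen))⟩
  | sub _ _ ih => exact ih

end TypedQASM
end
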